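/- arXiv:1306.6155 — 5 statements merged into one kernel-verified Lean document; each statement's English description precedes it below -/
import Mathlib

section
/- For every real x with 0 < x < 1 and every real s ≥ 1, the following identity of formal power series (or convergent series for |x|<1, |y|≤1) holds: 1 + ∑_{n≥1} p(n) x^n · E[y^{X_{s,n}}] = g(x) · ∏_{1 ≤ j ≤ ⌊s⌋} (1 − x^j)/(1 − (xy)^j), where g(x) = ∏_{k≥1}(1 − x^k)^{-1}. -/
/-- `X_{s,n}(λ)`: total size contributed by parts of `λ` of size at most `s`.
Since all parts are at most `n`, this agrees with the paper's convention
`X_{s,n} = n` for `s > n`. -/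
noncomputable def Xsn (s : ℝ) {n : ℕ} (lam : Nat.Partition n) : ℕ :=
  (lam.parts.filter (fun j => j ≤ ⌊s⌋₊)).sum

/-!
Give a part `j` of a partition the weight `w j = (x y)ʲ` if `j ≤ ⌊s⌋` and `w j = xʲ`
otherwise. A partition `λ` of `n` then has total weight `xⁿ y^{X_{s,n}(λ)}`, so the left-hand
side is the sum of the weights of all partitions. Recording multiplicities identifies the
partitions with all parts at most `N` with `Fin N → ℕ`, so their total weight is the product of
geometric series `∏_{j ≤ N} (1 - w j)⁻¹`. As `‖w j‖ ≤ xʲ` and `∑ p(n) xⁿ < ∞`, dominated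
convergence lets `N → ∞`, and the limit differs from `g(x)` only in the factors with `j ≤ ⌊s⌋`.
-/

open Filter Topology Finset

section PiProduct

variable {R : Type*} [NormedCommRing R] [CompleteSpace R] {ι : Type*}

theorem hasSum_prod_fin_pi_of_summable_norm {N : ℕ} {f : Fin N → ι → R} {a : Fin N → R}
    (hf : ∀ i, HasSum (f i) (a i)) (hf_norm : ∀ i, Summable fun k => ‖f i k‖) :
    HasSum (fun α : Fin N → ι => ∏ i, f i (α i)) (∏ i, a i) ∧
      Summable fun α : Fin N → ι => ‖∏ i, f i (α i)‖ := by
  induction N with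
  | zero => simp [(hasSum_fintype _).summable]
  | succ N ih =>
    obtain ⟨h_sum, h_summable⟩ := ih (fun i => hf i.succ) (fun i => hf_norm i.succ)
    set g := fun α : Fin N → ι => ∏ i, f i.succ (α i)
    have h_norm : Summable fun p : ι × (Fin N → ι) => ‖f 0 p.1 * g p.2‖ :=
      (hf_norm 0).mul_norm h_summable
    let e := Fin.consEquiv fun _ : Fin (N + 1) => ι
    have h_cons (p : ι × (Fin N → ι)) : ∏ i, f i (e p i) = f 0 p.1 * g p.2 := by
      simp [e, g, Fin.prod_univ_succ, Fin.consEquiv]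
    rw [← e.hasSum_iff, ← e.summable_iff, Fin.prod_univ_succ]
    simp only [Function.comp_def, h_cons]
    exact ⟨(hf 0).mul h_sum h_norm.of_norm, h_norm⟩

end PiProduct

section Geometric

variable {K : Type*} [NormedField K] [CompleteSpace K]

theorem hasSum_prod_fin_pi_pow {N : ℕ} {u : Fin N → K} (hu : ∀ i, ‖u i‖ < 1) :
    HasSum (fun α : Fin N → ℕ => ∏ i, u i ^ α i) (∏ i, (1 - u i)⁻¹) :=
  (hasSum_prod_fin_pi_of_summable_norm (f := fun i k => u i ^ k)
    (fun i => hasSum_geometric_of_norm_lt_one (hu i))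
    fun i => by simpa using summable_geometric_of_lt_one (norm_nonneg _) (hu i)).1

theorem multipliable_inv_one_sub_pow_succ {q : K} (hq : ‖q‖ < 1) :
    Multipliable fun j : ℕ => (1 - q ^ (j + 1))⁻¹ := by
  have h_le (j : ℕ) : ‖q ^ (j + 1)‖ ≤ ‖q‖ := by
    rw [norm_pow]; exact pow_le_of_le_one (norm_nonneg q) hq.le (by omega)
  have h_lower (j : ℕ) : 1 - ‖q‖ ≤ ‖1 - q ^ (j + 1)‖ := by
    have := norm_sub_norm_le (1 : K) (q ^ (j + 1))
    rw [norm_one] at this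
    linarith [h_le j]
  have h_ne (j : ℕ) : 1 - q ^ (j + 1) ≠ 0 :=
    norm_pos_iff.mp ((sub_pos.mpr hq).trans_le (h_lower j))
  have h_bound (j : ℕ) :
      ‖q ^ (j + 1) * (1 - q ^ (j + 1))⁻¹‖ ≤ ‖q‖ * (1 - ‖q‖)⁻¹ * ‖q‖ ^ j := by
    rw [norm_mul, norm_inv, norm_pow, pow_succ', mul_right_comm]
    gcongr
    exact h_lower j
  refine (multipliable_one_add_of_summable <| .of_nonneg_of_le (fun _ => norm_nonneg _) h_bound
    ((summable_geometric_of_lt_one (norm_nonneg q) hq).mul_left _)).congr fun j => ?_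
  field_simp [h_ne j]
  ring

end Geometric

def smallPartWeight {M : Type*} [Monoid M] (a b : M) (m j : ℕ) : M :=
  a ^ j * if j ≤ m then b ^ j else 1

theorem norm_smallPartWeight_le {K : Type*} [NormedField K] (a : K) {b : K} (hb : ‖b‖ ≤ 1)
    (m j : ℕ) : ‖smallPartWeight a b m j‖ ≤ ‖a‖ ^ j := by
  have : ‖if j ≤ m then b ^ j else 1‖ ≤ 1 := by
    split_ifs
    · exact norm_pow b j ▸ pow_le_one₀ (norm_nonneg b) hb
    · exact norm_one.le
  rw [smallPartWeight, norm_mul, norm_pow]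
  exact mul_le_of_le_one_right (by positivity) this

theorem hasProd_inv_one_sub_smallPartWeight {K : Type*} [Field K] [TopologicalSpace K]
    [ContinuousMul K] {a g : K} (b : K) (ha : ∀ j, a ^ (j + 1) ≠ 1)
    (hg : HasProd (fun j => (1 - a ^ (j + 1))⁻¹) g) (m : ℕ) :
    HasProd (fun j => (1 - smallPartWeight a b m (j + 1))⁻¹)
      (g * ∏ j ∈ Icc 1 m, (1 - a ^ j) / (1 - (a * b) ^ j)) := by
  let d (j : ℕ) : K := if j < m then (1 - a ^ (j + 1)) / (1 - (a * b) ^ (j + 1)) else 1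
  have h_factor (j : ℕ) :
      (1 - smallPartWeight a b m (j + 1))⁻¹ = (1 - a ^ (j + 1))⁻¹ * d j := by
    by_cases hj : j < m
    · have : 1 - a ^ (j + 1) ≠ 0 := sub_ne_zero.mpr (ha j).symm
      simp only [smallPartWeight, d, if_pos hj, if_pos (show j + 1 ≤ m by omega), ← mul_pow]
      field_simp
    · simp [smallPartWeight, d, hj, show ¬j + 1 ≤ m by omega]
  have h_d : ∏ j ∈ range m, d j = ∏ j ∈ Icc 1 m, (1 - a ^ j) / (1 - (a * b) ^ j) := by
    rw [← Ico_add_one_right_eq_Icc, prod_Ico_eq_prod_range, add_tsub_cancel_right]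
    exact prod_congr rfl fun j hj => by simp [d, mem_range.mp hj, add_comm]
  have h := hg.mul (hasProd_prod_of_ne_finset_one (f := d) (s := range m)
    fun j hj => if_neg (by simpa using hj))
  simpa only [← h_factor, h_d] using h

namespace Nat.Partition

theorem sigma_ext {p q : Σ n : ℕ, n.Partition} (h : p.2.parts = q.2.parts) : p = q := by
  obtain ⟨n, p⟩ := p
  obtain ⟨m, q⟩ := q
  obtain rfl : n = m := by rw [← p.parts_sum, ← q.parts_sum]; exact congrArg _ h
  exact congrArg _ (Nat.Partition.ext h)

def weight {M : Type*} [CommMonoid M] (w : ℕ → M) {n : ℕ} (p : n.Partition) : M :=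
  (p.parts.map w).prod

def partsOfCounts {N : ℕ} (α : Fin N → ℕ) : Multiset ℕ :=
  ∑ j, Multiset.replicate (α j) (j.val + 1)

section Counts

variable {N : ℕ} (α : Fin N → ℕ)

theorem pos_and_le_of_mem_partsOfCounts {i : ℕ} (h : i ∈ partsOfCounts α) :
    0 < i ∧ i ≤ N := by
  simp only [partsOfCounts, Multiset.mem_sum, Finset.mem_univ, Multiset.mem_replicate,
    true_and] at h
  omega

theorem count_partsOfCounts (j : Fin N) : (partsOfCounts α).count (j.val + 1) = α j := by
  simp [partsOfCounts, Multiset.count_sum', Multiset.count_replicate, Fin.val_inj]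

theorem prod_map_partsOfCounts {M : Type*} [CommMonoid M] (w : ℕ → M) :
    ((partsOfCounts α).map w).prod = ∏ j, w (j.val + 1) ^ α j := by
  rw [partsOfCounts, ← Multiset.coe_mapAddMonoidHom, map_sum]
  simp [Multiset.prod_sum]

end Counts

def withPartsLe (N : ℕ) : Set (Σ n : ℕ, n.Partition) := {p | ∀ i ∈ p.2.parts, i ≤ N}

theorem mem_withPartsLe_of_le {p : Σ n : ℕ, n.Partition} {N : ℕ} (h : p.1 ≤ N) :
    p ∈ withPartsLe N :=
  fun _ hi => (le_of_mem_parts hi).trans h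

def withPartsLeEquiv (N : ℕ) : withPartsLe N ≃ (Fin N → ℕ) where
  toFun p j := p.1.2.parts.count (j.val + 1)
  invFun α := ⟨⟨_, partsOfCounts α, fun h => (pos_and_le_of_mem_partsOfCounts α h).1, rfl⟩,
    fun _ h => (pos_and_le_of_mem_partsOfCounts α h).2⟩
  left_inv p := by
    refine Subtype.ext (sigma_ext (Multiset.ext.mpr fun i => ?_))
    by_cases hi : 0 < i ∧ i ≤ N
    · obtain ⟨j, rfl⟩ : ∃ j : Fin N, j.val + 1 = i :=
        ⟨⟨i - 1, by omega⟩, by simp; omega⟩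
      exact count_partsOfCounts _ j
    · rw [Multiset.count_eq_zero_of_notMem fun h => hi (pos_and_le_of_mem_partsOfCounts _ h),
        Multiset.count_eq_zero_of_notMem fun h => hi ⟨p.1.2.parts_pos h, p.2 i h⟩]
  right_inv α := funext (count_partsOfCounts α)

theorem weight_pow {n : ℕ} {M : Type*} [CommMonoid M] (a : M) (p : n.Partition) :
    p.weight (a ^ ·) = a ^ n := by
  suffices ∀ s : Multiset ℕ, (s.map (a ^ ·)).prod = a ^ s.sum from
    (this _).trans (congrArg _ p.parts_sum)
  intro s
  induction s using Multiset.induction_on <;> simp_all [pow_add]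

theorem weight_smallPartWeight {n : ℕ} {M : Type*} [CommMonoid M] (a b : M) (m : ℕ)
    (p : n.Partition) :
    p.weight (smallPartWeight a b m) = a ^ n * b ^ (p.parts.filter (· ≤ m)).sum := by
  unfold smallPartWeight
  rw [weight, Multiset.prod_map_mul, ← weight, weight_pow]
  congr 1
  induction p.parts using Multiset.induction_on with
  | empty => simp
  | cons i s ih => by_cases h : i ≤ m <;> simp [h, ih, pow_add]

section NormedField

variable {K : Type*} [NormedField K]

theorem norm_weight_le {w : ℕ → K} {r : ℝ} (hw : ∀ j, ‖w j‖ ≤ r ^ j) {n : ℕ}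
    (p : n.Partition) : ‖p.weight w‖ ≤ r ^ n := by
  suffices ∀ s : Multiset ℕ, ‖(s.map w).prod‖ ≤ r ^ s.sum from
    (this _).trans_eq (congrArg _ p.parts_sum)
  intro s
  induction s using Multiset.induction_on with
  | empty => simp
  | cons i s ih =>
    rw [Multiset.map_cons, Multiset.prod_cons, Multiset.sum_cons, norm_mul, pow_add]
    exact mul_le_mul (hw i) ih (norm_nonneg _) ((norm_nonneg _).trans (hw i))

theorem one_add_tsum_pnat_sum_weight {w : ℕ → K}
    (hw : Summable fun p : Σ n : ℕ, n.Partition => p.2.weight w) :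
    1 + ∑' n : ℕ+, ∑ p : Nat.Partition n, p.weight w =
      ∑' p : Σ n : ℕ, n.Partition, p.2.weight w := by
  have h_sum := hw.hasSum.sigma fun n => hasSum_fintype fun p : n.Partition => p.weight w
  have h_zero : ∑ p : Nat.Partition 0, p.weight w = 1 := by simp [weight]
  rw [← h_zero, tsum_zero_pnat_eq_tsum_nat h_sum.summable, h_sum.tsum_eq]

variable [CompleteSpace K]

theorem hasSum_indicator_withPartsLe_weight {w : ℕ → K} (hw : ∀ j, ‖w (j + 1)‖ < 1)
    (N : ℕ) :
    HasSum ((withPartsLe N).indicator fun p => p.2.weight w)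
      (∏ j ∈ range N, (1 - w (j + 1))⁻¹) := by
  rw [← hasSum_subtype_iff_indicator, ← (withPartsLeEquiv N).symm.hasSum_iff,
    ← Fin.prod_univ_eq_prod_range]
  convert hasSum_prod_fin_pi_pow fun j : Fin N => hw j with α
  exact prod_map_partsOfCounts α w

theorem summable_pow_sigma_fst {r : ℝ} (hr0 : 0 ≤ r) (hr1 : r < 1) :
    Summable fun p : Σ n : ℕ, n.Partition => r ^ p.1 := by
  have hr (j : ℕ) : ‖r ^ (j + 1)‖ < 1 := by
    rw [norm_pow, Real.norm_of_nonneg hr0]; exact pow_lt_one₀ hr0 hr1 (by omega)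
  have h_one_le (j : ℕ) : 1 ≤ (1 - r ^ (j + 1))⁻¹ := by
    have := pow_lt_one₀ hr0 hr1 (n := j + 1) (by omega)
    exact (one_le_inv₀ (by linarith)).mpr (by linarith [pow_nonneg hr0 (j + 1)])
  refine summable_of_sum_le (c := ∏' j, (1 - r ^ (j + 1))⁻¹) (fun p => pow_nonneg hr0 _)
    fun u => ?_
  set N := u.sup Sigma.fst
  calc ∑ p ∈ u, r ^ p.1
      = ∑ p ∈ u, (withPartsLe N).indicator (fun p => p.2.weight (r ^ ·)) p := by
        refine sum_congr rfl fun p hp => ?_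
        rw [Set.indicator_of_mem (mem_withPartsLe_of_le (le_sup hp)), weight_pow]
    _ ≤ ∏ j ∈ range N, (1 - r ^ (j + 1))⁻¹ :=
        sum_le_hasSum u (fun p _ => Set.indicator_nonneg (fun p _ => by
          rw [weight_pow]; positivity) p) (hasSum_indicator_withPartsLe_weight hr N)
    _ ≤ ∏' j, (1 - r ^ (j + 1))⁻¹ :=
        ge_of_tendsto (multipliable_inv_one_sub_pow_succ (by simpa [abs_of_nonneg hr0])).hasProd
          (eventually_ge_atTop (range N) |>.mono fun t ht =>
            prod_le_prod_of_subset_of_one_le ht (fun j _ => zero_le_one.trans (h_one_le j))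
              fun j _ _ => h_one_le j)

theorem summable_weight {w : ℕ → K} {r : ℝ} (hr0 : 0 ≤ r) (hr1 : r < 1)
    (hw : ∀ j, ‖w j‖ ≤ r ^ j) : Summable fun p : Σ n : ℕ, n.Partition => p.2.weight w :=
  .of_norm_bounded (summable_pow_sigma_fst hr0 hr1) fun p => norm_weight_le hw p.2

theorem tendsto_prod_range_inv_one_sub {w : ℕ → K} {r : ℝ} (hr0 : 0 ≤ r) (hr1 : r < 1)
    (hw : ∀ j, ‖w j‖ ≤ r ^ j) :
    Tendsto (fun N => ∏ j ∈ range N, (1 - w (j + 1))⁻¹) atTop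
      (𝓝 (∑' p : Σ n : ℕ, n.Partition, p.2.weight w)) := by
  have hw_lt (j : ℕ) : ‖w (j + 1)‖ < 1 := (hw _).trans_lt (pow_lt_one₀ hr0 hr1 (by omega))
  refine (tendsto_tsum_of_dominated_convergence
    (f := fun N => (withPartsLe N).indicator fun p => p.2.weight w)
    (summable_pow_sigma_fst hr0 hr1) (fun p => ?_) (.of_forall fun N p => ?_)).congr
    fun N => (hasSum_indicator_withPartsLe_weight hw_lt N).tsum_eq
  · refine tendsto_const_nhds.congr' (eventually_ge_atTop p.1 |>.mono fun N hN => ?_)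
    exact (Set.indicator_of_mem (mem_withPartsLe_of_le hN) fun p => p.2.weight w).symm
  · exact (norm_indicator_le_norm_self _ p).trans (norm_weight_le hw p.2)

end NormedField

end Nat.Partition

theorem pgf_Xsn_general (x : ℝ) (hx0 : 0 < x) (hx1 : x < 1) (s : ℝ)
    (y : ℂ) (hy : ‖y‖ ≤ 1) :
    1 + ∑' n : ℕ+, (Fintype.card (Nat.Partition (n : ℕ)) : ℂ) * (x : ℂ) ^ (n : ℕ) *
        ((Fintype.card (Nat.Partition (n : ℕ)) : ℂ)⁻¹ *
          ∑ lam : Nat.Partition (n : ℕ), y ^ Xsn s lam)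
      = (∏' k : ℕ+, (1 - (x : ℂ) ^ (k : ℕ))⁻¹) *
        ∏ j ∈ Finset.Icc 1 ⌊s⌋₊, (1 - (x : ℂ) ^ j) / (1 - ((x : ℂ) * y) ^ j) := by
  set w := smallPartWeight (x : ℂ) y ⌊s⌋₊
  have hx : ‖(x : ℂ)‖ = x := by simp [abs_of_pos hx0]
  have hw (j : ℕ) : ‖w j‖ ≤ x ^ j := hx ▸ norm_smallPartWeight_le _ hy _ j
  have h_term (n : ℕ) : (Fintype.card n.Partition : ℂ) * (x : ℂ) ^ n *
      ((Fintype.card n.Partition : ℂ)⁻¹ * ∑ lam : n.Partition, y ^ Xsn s lam) =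
        ∑ lam : n.Partition, lam.weight w := by
    have : (Fintype.card n.Partition : ℂ) ≠ 0 := Nat.cast_ne_zero.mpr Fintype.card_ne_zero
    simp only [w, Nat.Partition.weight_smallPartWeight, Xsn, mul_sum]
    field_simp
  rw [tsum_congr fun n : ℕ+ => h_term n, Nat.Partition.one_add_tsum_pnat_sum_weight
    (Nat.Partition.summable_weight hx0.le hx1 hw)]
  have hx_pow (j : ℕ) : (x : ℂ) ^ (j + 1) ≠ 1 := by
    exact_mod_cast (pow_lt_one₀ hx0.le hx1 (by omega)).ne
  have h_g : HasProd (fun j => (1 - (x : ℂ) ^ (j + 1))⁻¹)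
      (∏' k : ℕ+, (1 - (x : ℂ) ^ (k : ℕ))⁻¹) := by
    rw [tprod_pnat_eq_tprod_succ (f := fun k => (1 - (x : ℂ) ^ k)⁻¹)]
    exact (multipliable_inv_one_sub_pow_succ (hx.trans_lt hx1)).hasProd
  exact tendsto_nhds_unique (Nat.Partition.tendsto_prod_range_inv_one_sub hx0.le hx1 hw)
    (hasProd_inv_one_sub_smallPartWeight y hx_pow h_g _).tendsto_prod_nat

/-- For `0 < x < 1`, `s ≥ 1` and `‖y‖ ≤ 1`:
`1 + ∑_{n≥1} p(n) xⁿ E(y^{X_{s,n}}) = g(x) ∏_{1 ≤ j ≤ ⌊s⌋} (1−xʲ)/(1−(xy)ʲ)`. -/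
theorem pgf_Xsn (x : ℝ) (hx0 : 0 < x) (hx1 : x < 1) (s : ℝ) (hs : 1 ≤ s)
    (y : ℂ) (hy : ‖y‖ ≤ 1) :
    1 + ∑' n : ℕ+, (Fintype.card (Nat.Partition (n : ℕ)) : ℂ) * (x : ℂ) ^ (n : ℕ) *
        ((Fintype.card (Nat.Partition (n : ℕ)) : ℂ)⁻¹ *
          ∑ lam : Nat.Partition (n : ℕ), y ^ Xsn s lam)
      = (∏' k : ℕ+, (1 - (x : ℂ) ^ (k : ℕ))⁻¹) *
        ∏ j ∈ Finset.Icc 1 ⌊s⌋₊, (1 - (x : ℂ) ^ j) / (1 - ((x : ℂ) * y) ^ j) :=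
  pgf_Xsn_general x hx0 hx1 s y hy
end

section
/- For every real x with 0 < x < 1 and real s ≥ 1: 1 + ∑_{n≥1} p(n) x^n · E(y^{Y_{s,n}}) = g(x) · ∏_{1 ≤ j ≤ ⌊s⌋} (1 + (y−1)x^j) for all y with |y| ≤ 1, and consequently ∑_{n≥1} p(n) x^n · E(Y_{s,n}) = g(x) · (1 − x^{⌊s⌋+1})/(1 − x) − g(x). -/
/-!
Writing `y ^ Y = ∏_{1 ≤ j ≤ s} (1 + (y - 1) [j is a part])` and expanding the product turns
`∑_{λ ⊢ n} y ^ Y(λ)` into `∑_t (y - 1) ^ #t · #{λ ⊢ n | t ⊆ parts of λ}` over sets `t ⊆ [1, s]`.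
Removing the parts `t` is a bijection onto the partitions of `n - ∑ t`, so the generating function
of the count for `t` is `x ^ (∑ t) g(x)`, and summing over `t` refactors into the product. The
expectation is the same computation with `Y = ∑_j [j is a part]`, i.e. singletons `t = {j}`.

Euler's identity `g(x) = ∑ p(n) xⁿ` comes from the partitions with parts at most `N`: removing one
copy of the part `N + 1` gives `∏_{k ≤ N} (1 - xᵏ)⁻¹` as their generating function, and they
include all partitions of `n ≤ N`, so both sides are squeezed between these finite products.
-/

/-- `Y_{s,n}(λ)`: the number of distinct part sizes of `λ` that are at most `s`.
Since all parts are at most `n`, this agrees with the paper's convention for `s > n`. -/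
noncomputable def Ysn (s : ℝ) {n : ℕ} (lam : Nat.Partition n) : ℕ :=
  (lam.parts.toFinset.filter (fun j => j ≤ ⌊s⌋₊)).card

open Finset

lemma Finset.pow_card_filter_eq_sum_powerset {ι R : Type*} [CommRing R] (S : Finset ι)
    (P : ι → Prop) [DecidablePred P] (y : R) :
    y ^ #(S.filter P) = ∑ t ∈ S.powerset, (y - 1) ^ #t * if ∀ j ∈ t, P j then 1 else 0 := by
  calc y ^ #(S.filter P) = ∏ j ∈ S, (1 + (y - 1) * if P j then 1 else 0) := by
        rw [← prod_const, prod_filter]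
        exact prod_congr rfl fun j _ => by split_ifs <;> ring
    _ = _ := by simp_rw [prod_one_add, prod_mul_distrib, prod_const, prod_boole]

theorem HasSum.of_nat_add {G : Type*} [AddCommGroup G] [TopologicalSpace G]
    [IsTopologicalAddGroup G] {f : ℕ → G} {a : G} (d : ℕ) (hf : ∀ n < d, f n = 0)
    (h : HasSum (fun n => f (n + d)) a) : HasSum f a := by
  rwa [← hasSum_nat_add_iff' d, sum_eq_zero fun n hn => hf n (mem_range.1 hn), sub_zero]

lemma one_sub_pow_succ_pos {x : ℝ} (hx0 : 0 < x) (hx1 : x < 1) (k : ℕ) : 0 < 1 - x ^ (k + 1) :=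
  sub_pos.2 (pow_lt_one₀ hx0.le hx1 k.succ_ne_zero)

lemma multipliable_one_sub_pow_inv {x : ℝ} (hx0 : 0 < x) (hx1 : x < 1) :
    Multipliable fun k : ℕ => (1 - x ^ (k + 1))⁻¹ := by
  have hpos := one_sub_pow_succ_pos hx0 hx1
  have hsum : Summable fun k : ℕ => x ^ (k + 1) * (1 - x ^ (k + 1))⁻¹ := by
    refine (((summable_nat_add_iff 1).2 (summable_geometric_of_lt_one hx0.le hx1)).mul_right
      (1 - x)⁻¹).of_nonneg_of_le (fun k => (mul_pos (pow_pos hx0 _) (inv_pos.2 (hpos k))).le)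
      fun k => ?_
    have hxk : x ^ (k + 1) ≤ x := pow_le_of_le_one hx0.le hx1.le k.succ_ne_zero
    gcongr
  convert Real.multipliable_one_add_of_summable hsum using 2 with k
  field_simp [(hpos k).ne']
  ring

lemma prod_range_le_tprod_one_sub_pow_inv {x : ℝ} (hx0 : 0 < x) (hx1 : x < 1) (N : ℕ) :
    ∏ k ∈ range N, (1 - x ^ (k + 1))⁻¹ ≤ ∏' k : ℕ, (1 - x ^ (k + 1))⁻¹ := by
  have hpos (k : ℕ) := one_sub_pow_succ_pos hx0 hx1 k
  refine Monotone.ge_of_tendsto (monotone_nat_of_le_succ fun N => ?_)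
    (multipliable_one_sub_pow_inv hx0 hx1).hasProd.tendsto_prod_nat N
  rw [prod_range_succ]
  refine le_mul_of_one_le_right (prod_nonneg fun k _ => (inv_pos.2 (hpos k)).le) ?_
  exact (one_le_inv₀ (hpos N)).2 (by linarith [pow_pos hx0 (N + 1)])

namespace Nat.Partition

lemma sum_le_of_le_parts {n : ℕ} {l : n.Partition} {s : Multiset ℕ} (h : s ≤ l.parts) :
    s.sum ≤ n := by
  obtain ⟨u, hu⟩ := Multiset.le_iff_exists_add.1 h
  have := l.parts_sum
  rw [hu, Multiset.sum_add] at this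
  omega

lemma card_parts_le {n : ℕ} (l : n.Partition) : Multiset.card l.parts ≤ n := by
  simpa [l.parts_sum] using Multiset.card_nsmul_le_sum (a := 1) fun i hi => l.parts_pos hi

def addParts (s : Multiset ℕ) (hs : ∀ i ∈ s, 0 < i) {n : ℕ} (l : n.Partition) :
    (n + s.sum).Partition where
  parts := l.parts + s
  parts_pos hi := (Multiset.mem_add.1 hi).elim l.parts_pos (hs _)
  parts_sum := by rw [Multiset.sum_add, l.parts_sum]

lemma card_filter_le_parts_add_sum (s : Multiset ℕ) (hs : ∀ i ∈ s, 0 < i) (P : ℕ → Prop)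
    [DecidablePred P] (hP : ∀ i ∈ s, P i) (n : ℕ) :
    #{l : (n + s.sum).Partition | s ≤ l.parts ∧ ∀ i ∈ l.parts, P i} = #(restricted n P) := by
  symm
  refine card_nbij (addParts s hs) (fun l hl => ?_) (fun l₁ _ l₂ _ h => ?_) (fun l hl => ?_)
  · simp only [restricted, coe_filter, mem_univ, true_and, Set.mem_ofPred_eq] at hl ⊢
    refine ⟨Multiset.le_add_left _ _, fun i hi => ?_⟩
    exact (Multiset.mem_add.1 hi).elim (hl i) (hP i)
  · exact Nat.Partition.ext (add_right_cancel (congrArg Nat.Partition.parts h))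
  · simp only [coe_filter, mem_univ, true_and, Set.mem_ofPred_eq] at hl
    obtain ⟨u, hu⟩ := Multiset.le_iff_exists_add.1 hl.1
    have hsum : u.sum = n := by
      have := l.parts_sum
      rw [hu, Multiset.sum_add] at this
      omega
    refine ⟨⟨u, fun hi => l.parts_pos (hu ▸ Multiset.mem_add.2 (Or.inr hi)), hsum⟩, ?_, ?_⟩
    · simp only [restricted, coe_filter, mem_univ, true_and, Set.mem_ofPred_eq]
      exact fun i hi => hl.2 i (hu ▸ Multiset.mem_add.2 (Or.inr hi))
    · exact Nat.Partition.ext (by simp [addParts, hu, add_comm])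

lemma card_filter_le_parts_of_lt {s : Multiset ℕ} {n : ℕ} (P : ℕ → Prop) [DecidablePred P]
    (h : n < s.sum) : #{l : n.Partition | s ≤ l.parts ∧ ∀ i ∈ l.parts, P i} = 0 :=
  Finset.card_eq_zero.2 <| filter_eq_empty_iff.2 fun _ _ hl => (sum_le_of_le_parts hl.1).not_gt h

lemma restricted_le_eq_univ {N n : ℕ} (h : n ≤ N) : restricted n (· ≤ N) = univ :=
  filter_true_of_mem fun _ _ _ hi => (le_of_mem_parts hi).trans h

lemma card_restricted_le_zero (n : ℕ) : #(restricted n (· ≤ 0)) = if n = 0 then 1 else 0 := by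
  split_ifs with hn
  · subst hn
    simp [restricted]
  · refine Finset.card_eq_zero.2 <| filter_eq_empty_iff.2 fun l _ hl => hn ?_
    rw [← l.parts_sum, Multiset.eq_zero_of_forall_notMem fun i hi =>
      (hl i hi).not_gt (l.parts_pos hi), Multiset.sum_zero]

lemma card_restricted_le_succ (N n : ℕ) :
    #(restricted n (· ≤ N + 1)) = #(restricted n (· ≤ N)) +
      #{l : n.Partition | {N + 1} ≤ l.parts ∧ ∀ i ∈ l.parts, i ≤ N + 1} := by
  rw [← card_filter_add_card_filter_not (fun l : n.Partition => N + 1 ∉ l.parts), restricted,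
    restricted, filter_filter, filter_filter]
  congr 2
  · ext l
    simp only [mem_filter, mem_univ, true_and]
    refine ⟨fun h i hi => ?_, fun h => ⟨fun i hi => (h i hi).trans N.le_succ, fun hN => ?_⟩⟩
    · have := h.1 i hi
      have : i ≠ N + 1 := fun e => h.2 (e ▸ hi)
      omega
    · have := h _ hN
      omega
  · ext l
    simp only [mem_filter, mem_univ, true_and, Multiset.singleton_le, not_not, and_comm]

lemma card_restricted_le_le_pow (N n : ℕ) : #(restricted n (· ≤ N)) ≤ (n + 1) ^ N := by
  have hcount (l : n.Partition) (j : ℕ) : l.parts.count j < n + 1 :=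
    Nat.lt_succ_of_le ((Multiset.count_le_card _ _).trans l.card_parts_le)
  calc #(restricted n (· ≤ N))
      ≤ #(univ : Finset (Fin N → Fin (n + 1))) := by
        refine card_le_card_of_injOn (fun l i => ⟨l.parts.count (i + 1 : ℕ), hcount l _⟩)
          (fun _ _ => mem_coe.2 (mem_univ _)) fun l₁ hl₁ l₂ hl₂ h => Nat.Partition.ext ?_
        simp only [restricted, coe_filter, mem_univ, true_and, Set.mem_ofPred_eq] at hl₁ hl₂
        refine Multiset.ext.2 fun j => ?_
        rcases Nat.eq_zero_or_pos j with rfl | hj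
        · rw [Multiset.count_eq_zero.2 fun h => (l₁.parts_pos h).ne' rfl,
            Multiset.count_eq_zero.2 fun h => (l₂.parts_pos h).ne' rfl]
        by_cases hjN : j ≤ N
        · have := congrArg Fin.val (congrFun h ⟨j - 1, by omega⟩)
          simpa [Nat.sub_add_cancel hj] using this
        · rw [Multiset.count_eq_zero.2 fun h => hjN (hl₁ j h),
            Multiset.count_eq_zero.2 fun h => hjN (hl₂ j h)]
    _ = (n + 1) ^ N := by simp

lemma sum_pow_card_filter_mem_parts {R : Type*} [CommRing R] (S : Finset ℕ) (y : R) (n : ℕ) :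
    ∑ l : n.Partition, y ^ #{j ∈ S | j ∈ l.parts} =
      ∑ t ∈ S.powerset, (y - 1) ^ #t * #{l : n.Partition | ∀ j ∈ t, j ∈ l.parts} := by
  simp_rw [pow_card_filter_eq_sum_powerset, ← sum_boole, mul_sum]
  exact sum_comm

lemma sum_card_filter_mem_parts (S : Finset ℕ) (n : ℕ) :
    ∑ l : n.Partition, #{j ∈ S | j ∈ l.parts} = ∑ j ∈ S, #{l : n.Partition | j ∈ l.parts} := by
  simp_rw [card_filter]
  exact sum_comm

variable {x : ℝ}

lemma hasSum_card_filter_le_parts_mul_pow {A : ℝ} (s : Multiset ℕ) (hs : ∀ i ∈ s, 0 < i)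
    (P : ℕ → Prop) [DecidablePred P] (hP : ∀ i ∈ s, P i)
    (hA : HasSum (fun n => (#(restricted n P) : ℝ) * x ^ n) A) :
    HasSum (fun n => (#{l : n.Partition | s ≤ l.parts ∧ ∀ i ∈ l.parts, P i} : ℝ) * x ^ n)
      (x ^ s.sum * A) := by
  refine HasSum.of_nat_add s.sum (fun n hn => ?_)
    ((hA.mul_left (x ^ s.sum)).congr_fun fun n => ?_)
  · rw [card_filter_le_parts_of_lt _ hn, Nat.cast_zero, zero_mul]
  · rw [card_filter_le_parts_add_sum s hs P hP, pow_add]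
    ring

lemma summable_card_restricted_le_mul_pow (hx0 : 0 < x) (hx1 : x < 1) (N : ℕ) :
    Summable fun n => (#(restricted n (· ≤ N)) : ℝ) * x ^ n := by
  have hgeom : Summable fun n : ℕ => (n : ℝ) ^ N * x ^ n :=
    summable_pow_mul_geometric_of_norm_lt_one N (by rwa [Real.norm_of_nonneg hx0.le])
  have hpoly : Summable fun n : ℕ => x⁻¹ * (((n + 1 : ℕ) : ℝ) ^ N * x ^ (n + 1)) :=
    ((summable_nat_add_iff 1).2 hgeom).mul_left _
  refine hpoly.of_nonneg_of_le (fun n => by positivity) fun n => ?_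
  calc (#(restricted n (· ≤ N)) : ℝ) * x ^ n ≤ ((n + 1 : ℕ) : ℝ) ^ N * x ^ n := by
        gcongr
        exact_mod_cast card_restricted_le_le_pow N n
    _ = x⁻¹ * (((n + 1 : ℕ) : ℝ) ^ N * x ^ (n + 1)) := by
        field_simp
        ring

lemma hasSum_card_restricted_le_mul_pow (hx0 : 0 < x) (hx1 : x < 1) (N : ℕ) :
    HasSum (fun n => (#(restricted n (· ≤ N)) : ℝ) * x ^ n)
      (∏ k ∈ range N, (1 - x ^ (k + 1))⁻¹) := by
  induction N with
  | zero =>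
    rw [prod_range_zero]
    convert hasSum_ite_eq 0 (1 : ℝ) using 2 with n
    rw [card_restricted_le_zero]
    split_ifs <;> simp [*]
  | succ N ih =>
    -- Removing one part `N + 1` gives `A = ∏_{k ≤ N} (1 - xᵏ)⁻¹ + x ^ (N + 1) * A`, which
    -- determines `A` only once the series is known to converge.
    obtain ⟨A, hA⟩ := summable_card_restricted_le_mul_pow hx0 hx1 (N + 1)
    have hwith := hasSum_card_filter_le_parts_mul_pow {N + 1} (by simp) (· ≤ N + 1) (by simp) hA
    rw [Multiset.sum_singleton] at hwith
    have hsplit := ih.add hwith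
    simp only [← add_mul, ← Nat.cast_add, ← card_restricted_le_succ] at hsplit
    have hA' : A = (∏ k ∈ range N, (1 - x ^ (k + 1))⁻¹) * (1 - x ^ (N + 1))⁻¹ := by
      rw [eq_mul_inv_iff_mul_eq₀ (one_sub_pow_succ_pos hx0 hx1 N).ne']
      linear_combination hA.unique hsplit
    rwa [prod_range_succ, ← hA']

lemma sum_range_card_mul_pow_le_tprod (hx0 : 0 < x) (hx1 : x < 1) (N : ℕ) :
    ∑ n ∈ range N, (Fintype.card n.Partition : ℝ) * x ^ n ≤ ∏' k : ℕ, (1 - x ^ (k + 1))⁻¹ :=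
  calc ∑ n ∈ range N, (Fintype.card n.Partition : ℝ) * x ^ n
      = ∑ n ∈ range N, (#(restricted n (· ≤ N)) : ℝ) * x ^ n :=
        sum_congr rfl fun n hn => by
          rw [restricted_le_eq_univ (mem_range.1 hn).le, Finset.card_univ]
    _ ≤ ∏ k ∈ range N, (1 - x ^ (k + 1))⁻¹ :=
        sum_le_hasSum _ (fun n _ => by positivity) (hasSum_card_restricted_le_mul_pow hx0 hx1 N)
    _ ≤ _ := prod_range_le_tprod_one_sub_pow_inv hx0 hx1 N

lemma summable_card_mul_pow (hx0 : 0 < x) (hx1 : x < 1) :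
    Summable fun n => (Fintype.card n.Partition : ℝ) * x ^ n :=
  summable_of_sum_range_le (fun n => by positivity) (sum_range_card_mul_pow_le_tprod hx0 hx1)

theorem hasProd_one_sub_pow_inv (hx0 : 0 < x) (hx1 : x < 1) :
    HasProd (fun k : ℕ+ => (1 - x ^ (k : ℕ))⁻¹) (∑' n, (Fintype.card n.Partition : ℝ) * x ^ n) := by
  rw [hasProd_pnat_iff_hasProd_succ (f := fun k => (1 - x ^ k)⁻¹)]
  have hmul := multipliable_one_sub_pow_inv hx0 hx1
  convert hmul.hasProd using 1
  refine le_antisymm (Real.tsum_le_of_sum_range_le (fun n => by positivity)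
    (sum_range_card_mul_pow_le_tprod hx0 hx1)) (le_of_tendsto' hmul.hasProd.tendsto_prod_nat
      fun N => ?_)
  have hN := hasSum_card_restricted_le_mul_pow hx0 hx1 N
  rw [← hN.tsum_eq]
  refine hN.summable.tsum_le_tsum (fun n => ?_) (summable_card_mul_pow hx0 hx1)
  gcongr
  exact card_le_univ _

lemma hasSum_card_filter_forall_mem_parts_mul_pow (hx0 : 0 < x) (hx1 : x < 1) (t : Finset ℕ)
    (ht : ∀ j ∈ t, 0 < j) :
    HasSum (fun n => (#{l : n.Partition | ∀ j ∈ t, j ∈ l.parts} : ℝ) * x ^ n)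
      ((∏ j ∈ t, x ^ j) * ∑' n, (Fintype.card n.Partition : ℝ) * x ^ n) := by
  convert hasSum_card_filter_le_parts_mul_pow t.val ht (fun _ => True) (by simp)
    (by simpa [restricted] using (summable_card_mul_pow hx0 hx1).hasSum) using 1
  · simp [Multiset.le_iff_subset t.nodup, Multiset.subset_iff]
  · rw [prod_pow_eq_pow_sum, sum_val]
    rfl

end Nat.Partition

open Nat.Partition

lemma Ysn_eq_card_filter_mem_parts (s : ℝ) {n : ℕ} (l : n.Partition) :
    Ysn s l = #{j ∈ Icc 1 ⌊s⌋₊ | j ∈ l.parts} := by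
  unfold Ysn
  congr 1
  ext j
  simp only [mem_filter, Multiset.mem_toFinset, mem_Icc]
  exact ⟨fun h => ⟨⟨l.parts_pos h.1, h.2⟩, h.1⟩, fun h => ⟨h.2, h.1.2⟩⟩

lemma tsum_pnat_card_mul_pow_mul_mean {K : Type*} [Field K] [CharZero K] [TopologicalSpace K]
    [IsTopologicalAddGroup K] [T2Space K] (x : K) (w : (n : ℕ) → n.Partition → K) {a : K}
    (h : HasSum (fun n => x ^ n * ∑ l : n.Partition, w n l) a) :
    ∑' n : ℕ+, (Fintype.card (n : ℕ).Partition : K) * x ^ (n : ℕ) *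
        ((Fintype.card (n : ℕ).Partition : K)⁻¹ * ∑ l : (n : ℕ).Partition, w n l) =
      a - ∑ l : Nat.Partition 0, w 0 l := by
  have hcard (n : ℕ) : (Fintype.card n.Partition : K) ≠ 0 :=
    Nat.cast_ne_zero.2 (Fintype.card_pos_iff.2 ⟨indiscrete n⟩).ne'
  simp_rw [mul_comm _ (x ^ _), mul_assoc, mul_inv_cancel_left₀ (hcard _)]
  rw [← h.tsum_eq, ← tsum_zero_pnat_eq_tsum_nat h.summable, pow_zero, one_mul, add_sub_cancel_left]

lemma hasSum_pow_mul_sum_pow_Ysn {x : ℝ} (hx0 : 0 < x) (hx1 : x < 1) (s : ℝ) (y : ℂ) :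
    HasSum (fun n => (x : ℂ) ^ n * ∑ l : n.Partition, y ^ Ysn s l)
      (((∑' n, (Fintype.card n.Partition : ℝ) * x ^ n : ℝ) : ℂ) *
        ∏ j ∈ Icc 1 ⌊s⌋₊, (1 + (y - 1) * (x : ℂ) ^ j)) := by
  simp_rw [Ysn_eq_card_filter_mem_parts, sum_pow_card_filter_mem_parts, prod_one_add, mul_sum]
  refine hasSum_sum fun t ht => ?_
  have ht0 (j : ℕ) (hj : j ∈ t) : 0 < j := (mem_Icc.1 (mem_powerset.1 ht hj)).1
  have h := Complex.hasSum_ofReal.2 (hasSum_card_filter_forall_mem_parts_mul_pow hx0 hx1 t ht0)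
  simp only [Complex.ofReal_mul, Complex.ofReal_natCast, Complex.ofReal_pow, Complex.ofReal_prod]
    at h
  rw [prod_mul_distrib, prod_const, mul_left_comm, mul_comm (Complex.ofReal _)]
  exact (h.mul_left _).congr_fun fun n => by ring

lemma hasSum_pow_mul_sum_Ysn {x : ℝ} (hx0 : 0 < x) (hx1 : x < 1) (s : ℝ) :
    HasSum (fun n => x ^ n * ∑ l : n.Partition, (Ysn s l : ℝ))
      ((∑' n, (Fintype.card n.Partition : ℝ) * x ^ n) * (1 - x ^ (⌊s⌋₊ + 1)) / (1 - x) -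
        ∑' n, (Fintype.card n.Partition : ℝ) * x ^ n) := by
  simp_rw [Ysn_eq_card_filter_mem_parts, ← Nat.cast_sum, sum_card_filter_mem_parts, Nat.cast_sum,
    mul_sum]
  have hsum : HasSum (fun n => ∑ j ∈ Icc 1 ⌊s⌋₊, (#{l : n.Partition | j ∈ l.parts} : ℝ) * x ^ n)
      (∑ j ∈ Icc 1 ⌊s⌋₊, x ^ j * ∑' n, (Fintype.card n.Partition : ℝ) * x ^ n) :=
    hasSum_sum fun j hj => by
      simpa using hasSum_card_filter_forall_mem_parts_mul_pow hx0 hx1 {j}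
        fun i hi => by rw [mem_singleton.1 hi]; exact (mem_Icc.1 hj).1
  convert hsum using 1
  · ext n
    exact sum_congr rfl fun j _ => mul_comm _ _
  · rw [← sum_mul, ← Finset.Ico_add_one_right_eq_Icc, geom_sum_Ico hx1.ne (by omega)]
    field_simp [sub_ne_zero.2 hx1.ne, sub_ne_zero.2 hx1.ne']
    ring

theorem pgf_and_expectation_Ysn_general (x : ℝ) (hx0 : 0 < x) (hx1 : x < 1) (s : ℝ) :
    (∀ y : ℂ, ‖y‖ ≤ 1 →
      1 + ∑' n : ℕ+, (Fintype.card (Nat.Partition (n : ℕ)) : ℂ) * (x : ℂ) ^ (n : ℕ) *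
          ((Fintype.card (Nat.Partition (n : ℕ)) : ℂ)⁻¹ *
            ∑ lam : Nat.Partition (n : ℕ), y ^ Ysn s lam)
        = (∏' k : ℕ+, (1 - (x : ℂ) ^ (k : ℕ))⁻¹) *
          ∏ j ∈ Finset.Icc 1 ⌊s⌋₊, (1 + (y - 1) * (x : ℂ) ^ j)) ∧
    ∑' n : ℕ+, (Fintype.card (Nat.Partition (n : ℕ)) : ℝ) * x ^ (n : ℕ) *
        ((Fintype.card (Nat.Partition (n : ℕ)) : ℝ)⁻¹ *
          ∑ lam : Nat.Partition (n : ℕ), (Ysn s lam : ℝ))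
      = (∏' k : ℕ+, (1 - x ^ (k : ℕ))⁻¹) * (1 - x ^ (⌊s⌋₊ + 1)) / (1 - x)
        - ∏' k : ℕ+, (1 - x ^ (k : ℕ))⁻¹ := by
  have hG := hasProd_one_sub_pow_inv hx0 hx1
  have hGC : ∏' k : ℕ+, (1 - (x : ℂ) ^ (k : ℕ))⁻¹ =
      ((∑' n, (Fintype.card n.Partition : ℝ) * x ^ n : ℝ) : ℂ) := by
    have := hG.map Complex.ofRealHom Complex.continuous_ofReal
    simp only [Function.comp_def, Complex.ofRealHom_eq_coe, Complex.ofReal_inv, Complex.ofReal_sub,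
      Complex.ofReal_one, Complex.ofReal_pow] at this
    exact this.tprod_eq
  refine ⟨fun y _ => ?_, ?_⟩
  · rw [tsum_pnat_card_mul_pow_mul_mean _ (fun _ l => y ^ Ysn s l)
      (hasSum_pow_mul_sum_pow_Ysn hx0 hx1 s y), hGC]
    simp [Ysn]
  · rw [tsum_pnat_card_mul_pow_mul_mean _ (fun _ l => (Ysn s l : ℝ))
      (hasSum_pow_mul_sum_Ysn hx0 hx1 s), hG.tprod_eq]
    simp [Ysn]

/-- For `0 < x < 1`, `s ≥ 1`:
`1 + ∑_{n≥1} p(n) xⁿ E(y^{Y_{s,n}}) = g(x) ∏_{1≤j≤⌊s⌋} (1 + (y−1)xʲ)` for `‖y‖ ≤ 1`, and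
`∑_{n≥1} p(n) xⁿ E(Y_{s,n}) = g(x)(1−x^{⌊s⌋+1})/(1−x) − g(x)`
(the extra `−g(x)` accounts for the `n = 0` term). -/
theorem pgf_and_expectation_Ysn (x : ℝ) (hx0 : 0 < x) (hx1 : x < 1) (s : ℝ) (hs : 1 ≤ s) :
    (∀ y : ℂ, ‖y‖ ≤ 1 →
      1 + ∑' n : ℕ+, (Fintype.card (Nat.Partition (n : ℕ)) : ℂ) * (x : ℂ) ^ (n : ℕ) *
          ((Fintype.card (Nat.Partition (n : ℕ)) : ℂ)⁻¹ *
            ∑ lam : Nat.Partition (n : ℕ), y ^ Ysn s lam)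
        = (∏' k : ℕ+, (1 - (x : ℂ) ^ (k : ℕ))⁻¹) *
          ∏ j ∈ Finset.Icc 1 ⌊s⌋₊, (1 + (y - 1) * (x : ℂ) ^ j)) ∧
    ∑' n : ℕ+, (Fintype.card (Nat.Partition (n : ℕ)) : ℝ) * x ^ (n : ℕ) *
        ((Fintype.card (Nat.Partition (n : ℕ)) : ℝ)⁻¹ *
          ∑ lam : Nat.Partition (n : ℕ), (Ysn s lam : ℝ))
      = (∏' k : ℕ+, (1 - x ^ (k : ℕ))⁻¹) * (1 - x ^ (⌊s⌋₊ + 1)) / (1 - x)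
        - ∏' k : ℕ+, (1 - x ^ (k : ℕ))⁻¹ :=
  pgf_and_expectation_Ysn_general x hx0 hx1 s
end

section
/- Fristedt's conditioning identity: Let 0 < q < 1 be fixed and let (γ_j)_{j≥1} be independent random variables with P(γ_j = k) = (1 − q^j) q^{jk} for k = 0, 1, 2, …. Then for any nonnegative integers m_1, …, m_n with ∑_{j=1}^n j·m_j = n, the probability that a uniformly random partition λ of n has multiplicities α_j^{(n)}(λ) = m_j for j = 1, …, n equals the conditional probability P(γ_j = m_j for j = 1,…,n, and γ_j = 0 for j > n | ∑_{j≥1} j·γ_j = n). -/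
/-!
By independence, the event `γ = c` for a finitely supported `c : ℕ+ → ℕ` has probability
`(∏' j, (1 - qʲ)) · q ^ (∑ j, j * c j)`. Hence the multiplicity vectors of the partitions of `n`
are all equally likely, with positive probability. The event `∑ j, j * γ j = n` is the disjoint
union of these events, so each of them has conditional probability `1 / p(n)`, and exactly one
partition of `n` has the multiplicities `m`.
-/

open MeasureTheory ProbabilityTheory Finset
open scoped ENNReal

theorem tsum_pnat_eq_sum_Icc {n : ℕ} {α : Type*} [AddCommMonoid α] [TopologicalSpace α]
    {f : ℕ → α} (hf : ∀ k ∉ Icc 1 n, f k = 0) : ∑' j : ℕ+, f j = ∑ k ∈ Icc 1 n, f k := by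
  have h0 : f 0 = 0 := hf 0 (by simp)
  rw [PNat.coe_injective.tsum_eq fun k hk => ⟨⟨k, Nat.pos_of_ne_zero fun h => hk (h ▸ h0)⟩, rfl⟩,
    tsum_eq_sum hf]

namespace Nat.Partition

variable {n : ℕ}

theorem count_eq_zero_of_notMem_Icc (p : n.Partition) {k : ℕ} (hk : k ∉ Icc 1 n) :
    p.parts.count k = 0 :=
  Multiset.count_eq_zero.2 fun h => hk (mem_Icc.2 ⟨p.parts_pos h, p.le_of_mem_parts h⟩)

theorem eq_of_count_pnat_eq {p p' : n.Partition}
    (h : ∀ j : ℕ+, p.parts.count (j : ℕ) = p'.parts.count (j : ℕ)) : p = p' := by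
  refine Nat.Partition.ext (Multiset.ext.2 fun k => ?_)
  rcases Nat.eq_zero_or_pos k with rfl | hk
  · rw [p.count_eq_zero_of_notMem_Icc (by simp), p'.count_eq_zero_of_notMem_Icc (by simp)]
  · exact h ⟨k, hk⟩

def ofCounts (s : Finset ℕ) (m : ℕ → ℕ) (h : ∑ j ∈ s, j * m j = n) : n.Partition :=
  ofSums n (∑ j ∈ s, m j • {j}) (by simp [Multiset.sum_sum, Multiset.sum_nsmul, mul_comm, h])

theorem count_ofCounts {s : Finset ℕ} {m : ℕ → ℕ} (h : ∑ j ∈ s, j * m j = n) {j : ℕ}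
    (hj : j ≠ 0) : (ofCounts s m h).parts.count j = if j ∈ s then m j else 0 := by
  rw [ofCounts, count_ofSums_of_ne_zero _ hj]
  simp [Multiset.count_sum', Multiset.count_singleton]

theorem sum_Icc_mul_count (p : n.Partition) : ∑ j ∈ Icc 1 n, j * p.parts.count j = n := by
  have := (Finset.mem_finsuppAntidiag.1 p.toFinsuppAntidiag_mem_finsuppAntidiag).1
  simpa [toFinsuppAntidiag, mul_comm] using this

theorem count_ofCounts_Icc {m : ℕ → ℕ} (hm : ∑ j ∈ Icc 1 n, j * m j = n) (j : ℕ+) :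
    (ofCounts (Icc 1 n) m hm).parts.count (j : ℕ) = if (j : ℕ) ≤ n then m j else 0 := by
  simp [count_ofCounts hm j.ne_zero, Nat.one_le_iff_ne_zero.2 j.ne_zero]

theorem forall_count_eq_iff_eq_ofCounts {m : ℕ → ℕ} (hm : ∑ j ∈ Icc 1 n, j * m j = n)
    (p : n.Partition) :
    (∀ j ∈ Icc 1 n, p.parts.count j = m j) ↔ p = ofCounts (Icc 1 n) m hm := by
  refine ⟨fun h => eq_of_count_pnat_eq fun j => ?_, ?_⟩
  · rw [count_ofCounts_Icc]
    split_ifs with hj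
    · exact h j (mem_Icc.2 ⟨j.pos, hj⟩)
    · exact p.count_eq_zero_of_notMem_Icc (by simp [hj])
  · rintro rfl j hj
    rw [count_ofCounts hm (Nat.one_le_iff_ne_zero.1 (mem_Icc.1 hj).1), if_pos hj]

theorem exists_count_eq_iff (c : ℕ+ → ℕ) :
    (∃ p : n.Partition, ∀ j : ℕ+, p.parts.count (j : ℕ) = c j) ↔
      ∑' j : ℕ+, (j : ℝ≥0∞) * c j = n := by
  constructor
  · rintro ⟨p, hp⟩
    simp_rw [← hp]
    rw [tsum_pnat_eq_sum_Icc (f := fun k => (k : ℝ≥0∞) * p.parts.count k) 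
      fun k hk => by simp [p.count_eq_zero_of_notMem_Icc hk]]
    exact_mod_cast p.sum_Icc_mul_count
  · intro h
    have hc : ∀ j : ℕ+, n < j → c j = 0 := fun j hj => by
      by_contra hne
      have : (j : ℝ≥0∞) ≤ n := h ▸ le_trans (le_mul_of_one_le_right (by positivity) (by
        exact_mod_cast Nat.one_le_iff_ne_zero.2 hne)) (ENNReal.le_tsum j)
      exact_mod_cast this.not_gt (by exact_mod_cast hj)
    set m : ℕ → ℕ := fun k => c k.toPNat'
    have hm0 : ∀ k ∉ Icc 1 n, k * m k = 0 := fun k hk => by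
      rcases Nat.eq_zero_or_pos k with rfl | hk0
      · simp
      · simp [m, hc k.toPNat' (by simp at hk; simp [Nat.toPNat'_coe, hk0]; omega)]
    have hm : ∑ k ∈ Icc 1 n, k * m k = n := by
      have h' : ∑' j : ℕ+, (j : ℝ≥0∞) * m j = n := by simpa [m] using h
      rw [tsum_pnat_eq_sum_Icc (f := fun k => (k : ℝ≥0∞) * m k)
        fun k hk => by exact_mod_cast hm0 k hk] at h'
      exact_mod_cast h'
    refine ⟨ofCounts (Icc 1 n) m hm, fun j => ?_⟩
    rw [count_ofCounts hm j.ne_zero]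
    split_ifs with hj
    · simp [m]
    · simpa [m, j.ne_zero, eq_comm] using hm0 j hj

end Nat.Partition

theorem ProbabilityTheory.iIndepFun.measure_iInter_preimage_eq_tprod {Ω ι : Type*} [Countable ι]
    {mΩ : MeasurableSpace Ω} {μ : Measure Ω} {β : ι → Type*} [∀ i, MeasurableSpace (β i)]
    {X : ∀ i, Ω → β i} (hX : ∀ i, Measurable (X i)) (h : iIndepFun X μ)
    {t : ∀ i, Set (β i)} (ht : ∀ i, MeasurableSet (t i)) :
    μ (⋂ i, X i ⁻¹' t i) = ∏' i, μ (X i ⁻¹' t i) := by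
  have := h.isProbabilityMeasure
  have _ i := Measure.isProbabilityMeasure_map (hX i).aemeasurable (μ := μ)
  have hXm : Measurable fun ω i => X i ω := measurable_pi_lambda _ hX
  have hpi : ⋂ i, X i ⁻¹' t i = (fun ω i => X i ω) ⁻¹' Set.univ.pi t := by ext; simp
  rw [hpi, ← Measure.map_apply hXm (.univ_pi ht), h.map_fun_eq_infinitePi_map₀ hXm.aemeasurable,
    Measure.infinitePi_pi_univ _ ht]
  simp_rw [Measure.map_apply (hX _) (ht _)]

theorem HasProd.ennrealOfReal {ι : Type*} {f : ι → ℝ} {a : ℝ} (hf : ∀ i, 0 ≤ f i)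
    (h : HasProd f a) : HasProd (fun i => ENNReal.ofReal (f i)) (ENNReal.ofReal a) :=
  ((ENNReal.continuous_ofReal.tendsto a).comp h).congr fun s => by
    simp [ENNReal.ofReal_prod_of_nonneg fun i _ => hf i]

section OneSubPow

variable {q : ℝ} (hq0 : 0 ≤ q) (hq1 : q < 1)
include hq0 hq1

theorem one_sub_pow_pnat_pos (j : ℕ+) : 0 < 1 - q ^ (j : ℕ) :=
  sub_pos.2 (pow_lt_one₀ hq0 hq1 j.ne_zero)

theorem summable_log_one_sub_pow_pnat : Summable fun j : ℕ+ => Real.log (1 - q ^ (j : ℕ)) := by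
  simpa [sub_eq_add_neg] using Real.summable_log_one_add_of_summable
    ((summable_geometric_of_lt_one hq0 hq1).comp_injective PNat.coe_injective).neg

theorem multipliable_one_sub_pow_pnat : Multipliable fun j : ℕ+ => 1 - q ^ (j : ℕ) :=
  (Real.hasProd_of_hasSum_log (one_sub_pow_pnat_pos hq0 hq1)
    (summable_log_one_sub_pow_pnat hq0 hq1).hasSum).multipliable

theorem tprod_one_sub_pow_pnat_pos : 0 < ∏' j : ℕ+, (1 - q ^ (j : ℕ)) :=
  Real.rexp_tsum_eq_tprod (one_sub_pow_pnat_pos hq0 hq1) (summable_log_one_sub_pow_pnat hq0 hq1)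
    ▸ Real.exp_pos _

end OneSubPow

section Fristedt

variable {q : ℝ} {Ω : Type*} [MeasurableSpace Ω] {μ : Measure Ω} {γ : ℕ+ → Ω → ℕ}
  (hmeas : ∀ j, Measurable (γ j)) (hindep : iIndepFun γ μ)
  (hdist : ∀ (j : ℕ+) (k : ℕ),
    μ {ω | γ j ω = k} = ENNReal.ofReal ((1 - q ^ (j : ℕ)) * q ^ ((j : ℕ) * k)))
include hmeas hindep hdist

theorem measure_forall_eq_count (hq0 : 0 ≤ q) (hq1 : q < 1) {n : ℕ} (p : n.Partition) :
    μ {ω | ∀ j : ℕ+, γ j ω = p.parts.count (j : ℕ)}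
      = ENNReal.ofReal ((∏' j : ℕ+, (1 - q ^ (j : ℕ))) * q ^ n) := by
  have hweight : HasProd (fun j : ℕ+ => q ^ ((j : ℕ) * p.parts.count (j : ℕ))) (q ^ n) := by
    have hqn : q ^ n = ∏ k ∈ Icc 1 n, q ^ (k * p.parts.count k) := by
      rw [prod_pow_eq_pow_sum, p.sum_Icc_mul_count]
    have hone : ∀ k ∉ Icc 1 n, q ^ (k * p.parts.count k) = 1 := fun k hk => by
      simp [p.count_eq_zero_of_notMem_Icc hk]
    rw [hqn]
    exact (PNat.coe_injective.hasProd_iff fun k hk =>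
      hone k fun h => hk ⟨⟨k, (mem_Icc.1 h).1⟩, rfl⟩).2 (hasProd_prod_of_ne_finset_one hone)
  have hprod := ((multipliable_one_sub_pow_pnat hq0 hq1).hasProd.mul hweight).ennrealOfReal
    fun j => mul_nonneg (one_sub_pow_pnat_pos hq0 hq1 j).le (pow_nonneg hq0 _)
  have hcyl : {ω | ∀ j : ℕ+, γ j ω = p.parts.count (j : ℕ)}
      = ⋂ j : ℕ+, γ j ⁻¹' {p.parts.count (j : ℕ)} := by ext; simp
  rw [hcyl, hindep.measure_iInter_preimage_eq_tprod hmeas fun _ => measurableSet_singleton _,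
    ← hprod.tprod_eq]
  exact tprod_congr fun j => hdist j _

theorem cond_forall_eq_count (hq0 : 0 < q) (hq1 : q < 1) {n : ℕ} (p : n.Partition) :
    μ[{ω | ∀ j : ℕ+, γ j ω = p.parts.count (j : ℕ)}
        | {ω | ∑' j : ℕ+, ((j : ℕ) : ℝ≥0∞) * (γ j ω : ℝ≥0∞) = (n : ℝ≥0∞)}]
      = (Fintype.card n.Partition : ℝ≥0∞)⁻¹ := by
  set E : n.Partition → Set Ω := fun p => {ω | ∀ j : ℕ+, γ j ω = p.parts.count (j : ℕ)}
  set K := ENNReal.ofReal ((∏' j : ℕ+, (1 - q ^ (j : ℕ))) * q ^ n)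
  have hE : ∀ p, μ (E p) = K := measure_forall_eq_count hmeas hindep hdist hq0.le hq1
  have hK : K ≠ 0 := by
    simpa [K] using mul_pos (tprod_one_sub_pow_pnat_pos hq0.le hq1) (pow_pos hq0 n)
  have hS : {ω | ∑' j : ℕ+, ((j : ℕ) : ℝ≥0∞) * (γ j ω : ℝ≥0∞) = (n : ℝ≥0∞)} = ⋃ p, E p := by
    ext ω
    simp only [Set.mem_iUnion, Set.mem_ofPred_eq, E, ← Nat.Partition.exists_count_eq_iff]
    simp_rw [eq_comm]
  have hEm : ∀ p, MeasurableSet (E p) := fun p => by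
    simp only [E, Set.ofPred_forall]
    exact .iInter fun j => hmeas j (measurableSet_singleton _)
  have hdisj : Pairwise (Function.onFun Disjoint E) := fun p p' hne => by
    refine Set.disjoint_left.2 fun ω h h' => hne (Nat.Partition.eq_of_count_pnat_eq fun j => ?_)
    simp only [E, Set.mem_ofPred_eq] at h h'
    rw [← h, ← h']
  have hμS : μ (⋃ p, E p) = Fintype.card n.Partition * K := by
    simp [measure_iUnion hdisj hEm, hE]
  rw [hS, cond_apply (.iUnion hEm), Set.inter_eq_self_of_subset_right (Set.subset_iUnion E p),
    hμS, hE, ENNReal.mul_inv (by simp) (by simp), mul_assoc,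
    ENNReal.inv_mul_cancel hK ENNReal.ofReal_ne_top, mul_one]

end Fristedt

theorem fristedt_conditioning_general
    (q : ℝ) (hq0 : 0 < q) (hq1 : q < 1)
    {Ω : Type*} [MeasurableSpace Ω] (μ : Measure Ω)
    (γ : ℕ+ → Ω → ℕ) (hmeas : ∀ j, Measurable (γ j))
    (hindep : iIndepFun γ μ)
    (hdist : ∀ (j : ℕ+) (k : ℕ),
      μ {ω | γ j ω = k} = ENNReal.ofReal ((1 - q ^ (j : ℕ)) * q ^ ((j : ℕ) * k)))
    (n : ℕ) (m : ℕ → ℕ) (hm : ∑ j ∈ Finset.Icc 1 n, j * m j = n) :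
    (Nat.card {lam : Nat.Partition n // ∀ j ∈ Finset.Icc 1 n, lam.parts.count j = m j} : ℝ≥0∞)
        / (Fintype.card (Nat.Partition n) : ℝ≥0∞)
      = μ[{ω | (∀ j : ℕ+, (j : ℕ) ≤ n → γ j ω = m (j : ℕ)) ∧
              ∀ j : ℕ+, n < (j : ℕ) → γ j ω = 0}
          | {ω | ∑' j : ℕ+, ((j : ℕ) : ℝ≥0∞) * (γ j ω : ℝ≥0∞) = (n : ℝ≥0∞)}] := by
  set p₀ := Nat.Partition.ofCounts (Icc 1 n) m hm
  have hA : {ω | (∀ j : ℕ+, (j : ℕ) ≤ n → γ j ω = m (j : ℕ)) ∧ ∀ j : ℕ+, n < (j : ℕ) → γ j ω = 0}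
      = {ω | ∀ j : ℕ+, γ j ω = p₀.parts.count (j : ℕ)} := by
    ext ω
    simp only [Set.mem_ofPred_eq, p₀, Nat.Partition.count_ofCounts_Icc, ← forall_and]
    refine forall_congr' fun j => ?_
    split_ifs with hj
    · simp [hj]
    · simp [lt_of_not_ge hj]
  simp_rw [Nat.Partition.forall_count_eq_iff_eq_ofCounts hm, hA,
    cond_forall_eq_count hmeas hindep hdist hq0 hq1]
  simp

/-- Fristedt's conditioning identity: the multiplicities of a uniformly random partition
of `n` are distributed as independent geometric variables `γ_j`
(with `P(γ_j = k) = (1 − qʲ)q^{jk}`) conditioned on `∑_{j≥1} j γ_j = n`. -/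
theorem fristedt_conditioning
    (q : ℝ) (hq0 : 0 < q) (hq1 : q < 1)
    {Ω : Type*} [MeasurableSpace Ω] (μ : Measure Ω) [IsProbabilityMeasure μ]
    (γ : ℕ+ → Ω → ℕ) (hmeas : ∀ j, Measurable (γ j))
    (hindep : iIndepFun γ μ)
    (hdist : ∀ (j : ℕ+) (k : ℕ),
      μ {ω | γ j ω = k} = ENNReal.ofReal ((1 - q ^ (j : ℕ)) * q ^ ((j : ℕ) * k)))
    (n : ℕ) (hn : 0 < n) (m : ℕ → ℕ) (hm : ∑ j ∈ Finset.Icc 1 n, j * m j = n) :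
    (Nat.card {lam : Nat.Partition n // ∀ j ∈ Finset.Icc 1 n, lam.parts.count j = m j} : ℝ≥0∞)
        / (Fintype.card (Nat.Partition n) : ℝ≥0∞)
      = μ[{ω | (∀ j : ℕ+, (j : ℕ) ≤ n → γ j ω = m (j : ℕ)) ∧
              ∀ j : ℕ+, n < (j : ℕ) → γ j ω = 0}
          | {ω | ∑' j : ℕ+, ((j : ℕ) : ℝ≥0∞) * (γ j ω : ℝ≥0∞) = (n : ℝ≥0∞)}] :=
  fristedt_conditioning_general q hq0 hq1 μ γ hmeas hindep hdist n m hm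
end

section
/- The integral ∫_0^t u² e^{-u}/(1 − e^{-u})² du converges for every t > 0 (the integrand extends continuously to u = 0 with value 1), and ∫_0^∞ u² e^{-u}/(1 − e^{-u})² du = π²/3. -/
/-!
For `u > 0`, `e^{-u}/(1 - e^{-u})² = ∑ₖ k e^{-ku}`, so `u^s e^{-u}/(1 - e^{-u})²` is a series of
nonnegative functions with `∫₀^∞ k u^s e^{-ku} du = Γ(s+1)/k^s`. For `s > 1` these integrals are
summable, which gives integrability of the sum and `∫₀^∞ u^s e^{-u}/(1 - e^{-u})² du = Γ(s+1) ζ(s)`;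
at `s = 2` this is `2 · π²/6`.
-/

open MeasureTheory Set Real

theorem integrable_of_hasSum_of_nonneg {α ι : Type*} [MeasurableSpace α] [Countable ι]
    {μ : Measure α} {F : ι → α → ℝ} {f : α → ℝ}
    (hF_int : ∀ i, Integrable (F i) μ) (hF_nonneg : ∀ i, 0 ≤ᵐ[μ] F i)
    (hf : ∀ᵐ a ∂μ, HasSum (fun i ↦ F i a) (f a))
    (h_sum : Summable fun i ↦ ∫ a, F i a ∂μ) : Integrable f μ := by
  let G : α → ENNReal := fun a ↦ ∑' i, ENNReal.ofReal (F i a)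
  have hG_meas : AEMeasurable G μ :=
    AEMeasurable.tsum fun i ↦ (hF_int i).aemeasurable.ennreal_ofReal
  have hG_lint : ∫⁻ a, G a ∂μ = ENNReal.ofReal (∑' i, ∫ a, F i a ∂μ) := by
    rw [lintegral_tsum fun i ↦ (hF_int i).aemeasurable.ennreal_ofReal,
      ENNReal.ofReal_tsum_of_nonneg (fun i ↦ integral_nonneg_of_ae (hF_nonneg i)) h_sum]
    exact tsum_congr fun i ↦ (ofReal_integral_eq_lintegral_ofReal (hF_int i) (hF_nonneg i)).symm
  refine (integrable_toReal_of_lintegral_ne_top hG_meas (by simp [hG_lint])).congr ?_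
  filter_upwards [hf, ae_all_iff.2 hF_nonneg] with a ha h0
  show (∑' i, ENNReal.ofReal (F i a)).toReal = f a
  rw [← ha.tsum_eq, ← ENNReal.ofReal_tsum_of_nonneg h0 ha.summable,
    ENNReal.toReal_ofReal (tsum_nonneg h0)]

theorem hasSum_nat_mul_exp_neg_mul {u : ℝ} (hu : 0 < u) :
    HasSum (fun k : ℕ ↦ k * exp (-(k * u))) (exp (-u) / (1 - exp (-u)) ^ 2) := by
  have hr : ‖exp (-u)‖ < 1 := by
    rw [norm_of_nonneg (exp_pos _).le, exp_lt_one_iff]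
    linarith
  refine (hasSum_coe_mul_geometric_of_norm_lt_one hr).congr_fun fun k ↦ ?_
  rw [← exp_nat_mul, mul_neg]

section

variable {s : ℝ}

/- At `k = 0` both sides vanish: `0 ^ s = 0` as `s ≠ 0`, and `x / 0 = 0`. -/
theorem integral_nat_mul_rpow_mul_exp_neg_mul (hs : 0 < s) (k : ℕ) :
    ∫ u in Ioi 0, k * (u ^ s * exp (-(k * u))) = Gamma (s + 1) / k ^ s := by
  rcases k.eq_zero_or_pos with rfl | hk
  · simp [zero_rpow hs.ne']
  have hk' : (0 : ℝ) < k := Nat.cast_pos.2 hk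
  have h := integral_rpow_mul_exp_neg_mul_Ioi (a := s + 1) (by linarith) hk'
  rw [add_sub_cancel_right] at h
  rw [integral_const_mul, h, div_rpow zero_le_one hk'.le, one_rpow, rpow_add_one hk'.ne']
  field_simp

theorem integrableOn_nat_mul_rpow_mul_exp_neg_mul (hs : 0 < s) (k : ℕ) :
    IntegrableOn (fun u ↦ k * (u ^ s * exp (-(k * u)))) (Ioi 0) := by
  rcases k.eq_zero_or_pos with rfl | hk
  · simp
  refine Integrable.of_integral_ne_zero ?_
  rw [integral_nat_mul_rpow_mul_exp_neg_mul hs]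
  have : (0 : ℝ) < k := Nat.cast_pos.2 hk
  positivity

theorem summable_integral_nat_mul_rpow_mul_exp_neg_mul (hs : 1 < s) :
    Summable fun k : ℕ ↦ ∫ u in Ioi 0, k * (u ^ s * exp (-(k * u))) := by
  simp_rw [integral_nat_mul_rpow_mul_exp_neg_mul (zero_lt_one.trans hs)]
  simpa only [mul_one_div] using (summable_one_div_nat_rpow.2 hs).mul_left (Gamma (s + 1))

theorem nat_mul_rpow_mul_exp_neg_mul_nonneg {u : ℝ} (hu : 0 < u) (k : ℕ) :
    0 ≤ k * (u ^ s * exp (-(k * u))) := by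
  positivity

theorem hasSum_nat_mul_rpow_mul_exp_neg_mul {u : ℝ} (hu : 0 < u) :
    HasSum (fun k : ℕ ↦ k * (u ^ s * exp (-(k * u))))
      (u ^ s * exp (-u) / (1 - exp (-u)) ^ 2) := by
  rw [mul_div_assoc]
  refine ((hasSum_nat_mul_exp_neg_mul hu).mul_left (u ^ s)).congr_fun fun k ↦ ?_
  ring

theorem integrableOn_rpow_mul_exp_neg_div_one_sub_exp_neg_sq (hs : 1 < s) :
    IntegrableOn (fun u ↦ u ^ s * exp (-u) / (1 - exp (-u)) ^ 2) (Ioi 0) :=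
  integrable_of_hasSum_of_nonneg
    (integrableOn_nat_mul_rpow_mul_exp_neg_mul (zero_lt_one.trans hs))
    (fun k ↦ (ae_restrict_mem measurableSet_Ioi).mono fun _ hu ↦
      nat_mul_rpow_mul_exp_neg_mul_nonneg hu k)
    ((ae_restrict_mem measurableSet_Ioi).mono fun _ hu ↦ hasSum_nat_mul_rpow_mul_exp_neg_mul hu)
    (summable_integral_nat_mul_rpow_mul_exp_neg_mul hs)

theorem hasSum_integral_rpow_mul_exp_neg_div_one_sub_exp_neg_sq (hs : 1 < s) :
    HasSum (fun k : ℕ ↦ Gamma (s + 1) / k ^ s)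
      (∫ u in Ioi 0, u ^ s * exp (-u) / (1 - exp (-u)) ^ 2) := by
  have h_norm (k : ℕ) : ∫ u in Ioi 0, ‖(k : ℝ) * (u ^ s * exp (-(k * u)))‖ =
      ∫ u in Ioi 0, k * (u ^ s * exp (-(k * u))) :=
    setIntegral_congr_fun measurableSet_Ioi fun _ hu ↦
      norm_of_nonneg (nat_mul_rpow_mul_exp_neg_mul_nonneg hu k)
  have h := hasSum_integral_of_summable_integral_norm
    (integrableOn_nat_mul_rpow_mul_exp_neg_mul (zero_lt_one.trans hs))
    (by simpa only [h_norm] using summable_integral_nat_mul_rpow_mul_exp_neg_mul hs)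
  rw [setIntegral_congr_fun measurableSet_Ioi fun _ hu ↦
    (hasSum_nat_mul_rpow_mul_exp_neg_mul hu).tsum_eq] at h
  simpa only [integral_nat_mul_rpow_mul_exp_neg_mul (zero_lt_one.trans hs)] using h

end

/-- The integral `∫_0^t u² e^{-u}/(1−e^{-u})² du` converges for every `t > 0`, and
`∫_0^∞ u² e^{-u}/(1−e^{-u})² du = π²/3`. -/
theorem integral_sq_exp_div :
    (∀ t : ℝ, 0 < t →
      IntegrableOn (fun u : ℝ => u ^ 2 * Real.exp (-u) / (1 - Real.exp (-u)) ^ 2)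
        (Set.Ioc 0 t)) ∧
    ∫ u in Set.Ioi (0 : ℝ), u ^ 2 * Real.exp (-u) / (1 - Real.exp (-u)) ^ 2
      = Real.pi ^ 2 / 3 := by
  have h_int := integrableOn_rpow_mul_exp_neg_div_one_sub_exp_neg_sq one_lt_two
  have h_sum := hasSum_integral_rpow_mul_exp_neg_div_one_sub_exp_neg_sq one_lt_two
  have h_gamma : Gamma (2 + 1) = 2 := by
    simpa using Gamma_nat_eq_factorial 2
  simp only [rpow_two, h_gamma] at h_int h_sum
  have h_zeta : HasSum (fun k : ℕ ↦ 2 / (k : ℝ) ^ 2) (π ^ 2 / 3) := by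
    rw [show π ^ 2 / 3 = 2 * (π ^ 2 / 6) by ring]
    simpa only [mul_one_div] using hasSum_zeta_two.mul_left 2
  exact ⟨fun t _ ↦ h_int.mono_set Ioc_subset_Ioi_self, h_sum.unique h_zeta⟩
end

section
/- Let Y_n and Y_{s,n} be random variables on a probability space with 0 ≤ Y_{s,n} ≤ Y_n ≤ n a.s., and let a_n = √(6n)/π. Assume: (i) P(|Y_n/a_n − 1| > ε) ≤ e^{-c(ε)√n} for every ε > 0 and n large; (ii) E(Y_{s,n}) / a_n → L as n → ∞ for some L ∈ [0,1]. Then E(Y_{s,n}/Y_n) → L as n → ∞ (where the ratio is interpreted as 0 when Y_n = 0). -/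
open MeasureTheory Filter
open scoped Topology ENNReal

/-!
On the event `|Y/a - 1| ≤ ε` the ratio `X/Y` lies between `X/((1+ε)a)` and `X/((1-ε)a)`;
on the exceptional event it lies in `[0, 1]`, while `X/((1+ε)a) ≤ n/a` because `X ≤ n`.
Integrating, `E(X/Y)` is squeezed between `E X / ((1+ε)a)` and `E X / ((1-ε)a)` up to errors
of order `n · P(exceptional)`, which vanish because the exceptional probability decays like
`exp(-c√n)`. Letting `ε → 0` gives the limit.
-/

lemma tendsto_of_forall_eventually_div_one_add_sub_le_of_le_div_one_sub_add {ι : Type*}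
    {l : Filter ι} {I J : ι → ℝ} {L : ℝ} (hI : Tendsto I l (𝓝 L))
    (h : ∀ ε, 0 < ε → ε < 1 → ∃ e : ι → ℝ, Tendsto e l (𝓝 0) ∧
      ∀ᶠ i in l, I i / (1 + ε) - e i ≤ J i ∧ J i ≤ I i / (1 - ε) + e i) :
    Tendsto J l (𝓝 L) := by
  have hsmall : ∀ᶠ ε in 𝓝[>] (0 : ℝ), 0 < ε ∧ ε < 1 := Ioo_mem_nhdsGT one_pos
  have hcont : ∀ s : ℝ, Tendsto (fun ε : ℝ => L / (1 + s * ε)) (𝓝[>] 0) (𝓝 L) := fun s => by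
    have h : Tendsto (fun ε : ℝ => L / (1 + s * ε)) (𝓝 0) (𝓝 (L / (1 + s * 0))) :=
      tendsto_const_nhds.div (tendsto_const_nhds.add (tendsto_id.const_mul s)) (by simp)
    simpa using h.mono_left nhdsWithin_le_nhds
  rw [tendsto_order]
  constructor
  · intro b hb
    obtain ⟨ε, hbε, hε0, hε1⟩ :=
      (((hcont 1).eventually (lt_mem_nhds hb)).and hsmall).exists
    obtain ⟨e, he, hJ⟩ := h ε hε0 hε1
    have hlow : Tendsto (fun i => I i / (1 + ε) - e i) l (𝓝 (L / (1 + ε) - 0)) :=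
      (hI.div_const _).sub he
    filter_upwards [hlow.eventually (lt_mem_nhds (by simpa using hbε)), hJ] with i hi hJi
    exact hi.trans_le hJi.1
  · intro b hb
    obtain ⟨ε, hbε, hε0, hε1⟩ :=
      (((hcont (-1)).eventually (gt_mem_nhds hb)).and hsmall).exists
    obtain ⟨e, he, hJ⟩ := h ε hε0 hε1
    have hupp : Tendsto (fun i => I i / (1 - ε) + e i) l (𝓝 (L / (1 - ε) + 0)) :=
      (hI.div_const _).add he
    filter_upwards [hupp.eventually (gt_mem_nhds (by simpa [sub_eq_add_neg] using hbε)), hJ]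
      with i hi hJi
    exact hJi.2.trans_lt hi

lemma div_le_div_of_abs_div_sub_one_le {x y a ε : ℝ} (hx : 0 ≤ x) (ha : 0 < a) (hε : ε < 1)
    (h : |y / a - 1| ≤ ε) : x / ((1 + ε) * a) ≤ x / y ∧ x / y ≤ x / ((1 - ε) * a) := by
  obtain ⟨hlow, hupp⟩ := abs_le.mp h
  have hlow' : (1 - ε) * a ≤ y := by rw [← le_div_iff₀ ha]; linarith
  have hupp' : y ≤ (1 + ε) * a := by rw [← div_le_iff₀ ha]; linarith
  have hpos : 0 < (1 - ε) * a := mul_pos (by linarith) ha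
  exact ⟨div_le_div_of_nonneg_left hx (hpos.trans_le hlow') hupp',
    div_le_div_of_nonneg_left hx hpos hlow'⟩

lemma tendsto_natCast_mul_exp_neg_mul_sqrt {c : ℝ} (hc : 0 < c) :
    Tendsto (fun n : ℕ => n * Real.exp (-c * Real.sqrt n)) atTop (𝓝 0) := by
  have h := (tendsto_rpow_mul_exp_neg_mul_atTop_nhds_zero 2 c hc).comp
    (Real.tendsto_sqrt_atTop.comp tendsto_natCast_atTop_atTop)
  refine h.congr fun n => ?_
  simp [Real.sq_sqrt (Nat.cast_nonneg n)]

section RatioBounds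

variable {Ω : Type*} [MeasurableSpace Ω] {μ : Measure Ω} [IsFiniteMeasure μ] {X Y : Ω → ℝ}
  {a ε : ℝ}

lemma integral_div_le (hX : Integrable X μ) (hY : Measurable Y)
    (hXY : ∀ᵐ ω ∂μ, 0 ≤ X ω ∧ X ω ≤ Y ω) (ha : 0 < a) (hε : ε < 1) :
    ∫ ω, X ω / Y ω ∂μ ≤ (∫ ω, X ω ∂μ) / a / (1 - ε) + μ.real {ω | ε < |Y ω / a - 1|} := by
  set B := {ω | ε < |Y ω / a - 1|}
  have hB : MeasurableSet B :=
    measurableSet_lt measurable_const (((hY.div_const a).sub_const 1).abs)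
  have hind : Integrable (B.indicator (1 : Ω → ℝ)) μ := (integrable_const 1).indicator hB
  have hpos : 0 < (1 - ε) * a := mul_pos (by linarith) ha
  have hnonneg : 0 ≤ᵐ[μ] fun ω => X ω / Y ω := by
    filter_upwards [hXY] with ω h using div_nonneg h.1 (h.1.trans h.2)
  have hbound : ∀ᵐ ω ∂μ, X ω / Y ω ≤ X ω / ((1 - ε) * a) + B.indicator 1 ω := by
    filter_upwards [hXY] with ω ⟨hX0, hXY⟩
    by_cases hω : ω ∈ B
    · rw [Set.indicator_of_mem hω, Pi.one_apply]
      have := div_le_one_of_le₀ hXY (hX0.trans hXY)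
      have := div_nonneg hX0 hpos.le
      linarith
    · rw [Set.indicator_of_notMem hω, add_zero]
      exact (div_le_div_of_abs_div_sub_one_le hX0 ha hε (not_lt.mp hω)).2
  calc ∫ ω, X ω / Y ω ∂μ
      ≤ ∫ ω, (X ω / ((1 - ε) * a) + B.indicator 1 ω) ∂μ :=
        integral_mono_of_nonneg hnonneg ((hX.div_const _).add hind) hbound
    _ = _ := by
        rw [integral_add (hX.div_const _) hind, integral_div,
          integral_indicator_one hB, div_mul_eq_div_div_swap]

lemma div_sub_le_integral_div {M : ℝ} (hX : Measurable X) (hY : Measurable Y)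
    (hXY : ∀ᵐ ω ∂μ, 0 ≤ X ω ∧ X ω ≤ Y ω ∧ Y ω ≤ M) (ha : 0 < a) (hε0 : 0 ≤ ε) (hε : ε < 1) :
    (∫ ω, X ω ∂μ) / a / (1 + ε) - M / a * μ.real {ω | ε < |Y ω / a - 1|}
      ≤ ∫ ω, X ω / Y ω ∂μ := by
  set B := {ω | ε < |Y ω / a - 1|}
  have hB : MeasurableSet B :=
    measurableSet_lt measurable_const (((hY.div_const a).sub_const 1).abs)
  have hratio : Integrable (fun ω => X ω / Y ω) μ := by
    refine (integrable_const 1).mono' (hX.div hY).aestronglyMeasurable ?_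
    filter_upwards [hXY] with ω ⟨hX0, hXY, _⟩
    rw [Real.norm_of_nonneg (div_nonneg hX0 (hX0.trans hXY))]
    exact div_le_one_of_le₀ hXY (hX0.trans hXY)
  have hpos : 0 < (1 + ε) * a := mul_pos (by linarith) ha
  have hbound : ∀ᵐ ω ∂μ, X ω / ((1 + ε) * a) ≤ X ω / Y ω + B.indicator (fun _ => M / a) ω := by
    filter_upwards [hXY] with ω ⟨hX0, hXY, hYM⟩
    by_cases hω : ω ∈ B
    · rw [Set.indicator_of_mem hω]
      have : X ω / ((1 + ε) * a) ≤ M / a :=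
        (div_le_div_of_nonneg_left hX0 ha (by nlinarith)).trans
          (div_le_div_of_nonneg_right (hXY.trans hYM) ha.le)
      have := div_nonneg hX0 (hX0.trans hXY)
      linarith
    · rw [Set.indicator_of_notMem hω, add_zero]
      exact (div_le_div_of_abs_div_sub_one_le hX0 ha hε (not_lt.mp hω)).1
  have hind : Integrable (B.indicator fun _ => M / a) μ := (integrable_const _).indicator hB
  calc (∫ ω, X ω ∂μ) / a / (1 + ε) - M / a * μ.real B
      = ∫ ω, X ω / ((1 + ε) * a) ∂μ - ∫ ω, B.indicator (fun _ => M / a) ω ∂μ := by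
        rw [integral_div, integral_indicator_const _ hB, smul_eq_mul, div_mul_eq_div_div_swap,
          mul_comm]
    _ ≤ ∫ ω, X ω / Y ω ∂μ := by
        rw [sub_le_iff_le_add, ← integral_add hratio hind]
        refine integral_mono_of_nonneg ?_ (hratio.add hind) hbound
        filter_upwards [hXY] with ω h using div_nonneg h.1 hpos.le

end RatioBounds

theorem expected_ratio_tendsto_general
    {Ω : ℕ → Type*} [∀ n, MeasurableSpace (Ω n)]
    (μ : ∀ n, Measure (Ω n)) [∀ n, IsProbabilityMeasure (μ n)]
    (Y Ys : ∀ n, Ω n → ℝ)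
    (hYmeas : ∀ n, Measurable (Y n)) (hYsmeas : ∀ n, Measurable (Ys n))
    (hbound : ∀ n, ∀ᵐ ω ∂(μ n), 0 ≤ Ys n ω ∧ Ys n ω ≤ Y n ω ∧ Y n ω ≤ n)
    (a : ℕ → ℝ) (ha : ∀ n, a n = Real.sqrt (6 * n) / Real.pi)
    (hconc : ∀ ε : ℝ, 0 < ε → ∃ c > (0 : ℝ), ∀ᶠ n in atTop,
      μ n {ω | ε < |Y n ω / a n - 1|} ≤ ENNReal.ofReal (Real.exp (-c * Real.sqrt n)))
    (L : ℝ)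
    (hnum : Tendsto (fun n => (∫ ω, Ys n ω ∂(μ n)) / a n) atTop (𝓝 L)) :
    Tendsto (fun n => ∫ ω, (if Y n ω = 0 then 0 else Ys n ω / Y n ω) ∂(μ n))
      atTop (𝓝 L) := by
  have hratio : ∀ n ω, (if Y n ω = 0 then 0 else Ys n ω / Y n ω) = Ys n ω / Y n ω :=
    fun n ω => by split_ifs with h <;> simp [h]
  simp only [hratio]
  have ha1 : ∀ᶠ n in atTop, 1 ≤ a n := by
    simp only [ha]
    exact ((Real.tendsto_sqrt_atTop.comp (tendsto_natCast_atTop_atTop.const_mul_atTop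
      (by norm_num : (0 : ℝ) < 6))).atTop_div_const Real.pi_pos).eventually_ge_atTop 1
  refine tendsto_of_forall_eventually_div_one_add_sub_le_of_le_div_one_sub_add hnum
    fun ε hε0 hε1 => ?_
  obtain ⟨c, hc, hexc⟩ := hconc ε hε0
  refine ⟨_, tendsto_natCast_mul_exp_neg_mul_sqrt hc, ?_⟩
  filter_upwards [ha1, hexc, eventually_ge_atTop 1] with n han hexcn hn
  have hYsY : ∀ᵐ ω ∂μ n, 0 ≤ Ys n ω ∧ Ys n ω ≤ Y n ω := by
    filter_upwards [hbound n] with ω h using ⟨h.1, h.2.1⟩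
  have hYsint : Integrable (Ys n) (μ n) := by
    refine (integrable_const (n : ℝ)).mono' (hYsmeas n).aestronglyMeasurable ?_
    filter_upwards [hbound n] with ω ⟨h0, h1, h2⟩
    rw [Real.norm_of_nonneg h0]
    exact h1.trans h2
  have ha0 : 0 < a n := zero_lt_one.trans_le han
  set p := (μ n).real {ω | ε < |Y n ω / a n - 1|}
  have hp : p ≤ Real.exp (-c * Real.sqrt n) :=
    ENNReal.toReal_le_of_le_ofReal (Real.exp_pos _).le hexcn
  have hn' : (1 : ℝ) ≤ n := by exact_mod_cast hn
  have hlow := div_sub_le_integral_div (hYsmeas n) (hYmeas n) (hbound n) ha0 hε0.le hε1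
  have hupp := integral_div_le hYsint (hYmeas n) hYsY ha0 hε1
  have hnp : n / a n * p ≤ n * Real.exp (-c * Real.sqrt n) :=
    mul_le_mul (div_le_self (by positivity) han) hp measureReal_nonneg (by positivity)
  have hp' : p ≤ n * Real.exp (-c * Real.sqrt n) :=
    hp.trans (le_mul_of_one_le_left (Real.exp_pos _).le hn')
  constructor <;> linarith

/-- Abstract version of the main step in the proof of Theorem 2: if the denominator
`Y_n` concentrates around `a_n = √(6n)/π` with exponentially small exceptional
probability, `0 ≤ Y_{s,n} ≤ Y_n ≤ n` a.s., and `E(Y_{s,n})/a_n → L ∈ [0,1]`, then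
`E(Y_{s,n}/Y_n) → L` (the ratio being read as `0` when `Y_n = 0`). -/
theorem expected_ratio_tendsto
    {Ω : ℕ → Type*} [∀ n, MeasurableSpace (Ω n)]
    (μ : ∀ n, Measure (Ω n)) [∀ n, IsProbabilityMeasure (μ n)]
    (Y Ys : ∀ n, Ω n → ℝ)
    (hYmeas : ∀ n, Measurable (Y n)) (hYsmeas : ∀ n, Measurable (Ys n))
    (hbound : ∀ n, ∀ᵐ ω ∂(μ n), 0 ≤ Ys n ω ∧ Ys n ω ≤ Y n ω ∧ Y n ω ≤ n)
    (a : ℕ → ℝ) (ha : ∀ n, a n = Real.sqrt (6 * n) / Real.pi)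
    (hconc : ∀ ε : ℝ, 0 < ε → ∃ c > (0 : ℝ), ∀ᶠ n in atTop,
      μ n {ω | ε < |Y n ω / a n - 1|} ≤ ENNReal.ofReal (Real.exp (-c * Real.sqrt n)))
    (L : ℝ) (hL0 : 0 ≤ L) (hL1 : L ≤ 1)
    (hnum : Tendsto (fun n => (∫ ω, Ys n ω ∂(μ n)) / a n) atTop (𝓝 L)) :
    Tendsto (fun n => ∫ ω, (if Y n ω = 0 then 0 else Ys n ω / Y n ω) ∂(μ n))
      atTop (𝓝 L) :=
  expected_ratio_tendsto_general μ Y Ys hYmeas hYsmeas hbound a ha hconc L hnum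
end
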